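/- Let σ = {B_1,…,B_k} be a set partition of [n] with blocks listed in increasing order of their minimal elements, and let i be an integer with 2 ≤ i ≤ n. If B_p ∩ [i,n] ≠ ∅ for every 1 ≤ p ≤ k and min(B_1 ∩ [i,n]) < min(B_2 ∩ [i,n]) < … < min(B_k ∩ [i,n]), then σ = σ_{[i-1]} ∘ (σ_{[i,n]} − i + 1); in particular σ is splitable. -/

import Mathlib

/-- A block of a set partition: a finite set of positive integers. -/
abbrev Block : Type := Finset ℕ

/-- The underlying set of a list of blocks (the union of all blocks). -/
def support (P : List Block) : Finset ℕ := P.foldr (· ∪ ·) ∅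

/-- `P` is a set partition of `[n] = {1,…,n}`: a list of pairwise disjoint nonempty
blocks with union `{1,…,n}`, listed in increasing order of their minimal elements. -/
def IsPartition (n : ℕ) (P : List Block) : Prop :=
  (∀ B ∈ P, B.Nonempty) ∧ List.Pairwise Disjoint P ∧
    support P = Finset.Icc 1 n ∧
    List.Chain' (fun B C : Block => B.min < C.min) P

/-- Add `m` to every element of every block: `σ + m`. -/
def shiftUp (m : ℕ) (P : List Block) : List Block := P.map fun B => B.image (· + m)

/-- Subtract `m` from every element of every block. -/
def shiftDown (m : ℕ) (P : List Block) : List Block := P.map fun B => B.image (· - m)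

/-- The slash product `π | σ` where `π` is a partition of `[m]`. -/
def slash (m : ℕ) (P Q : List Block) : List Block := P ++ shiftUp m Q

/-- `P` is an atomic partition of `[n]`: it is not a slash product of two
nonempty partitions. -/
def Atomic (n : ℕ) (P : List Block) : Prop :=
  ¬ ∃ (a b : ℕ) (σ τ : List Block), 0 < a ∧ 0 < b ∧ a + b = n ∧
      IsPartition a σ ∧ IsPartition b τ ∧ P = slash a σ τ

/-- The split product `π ∘ σ` where `π` is a partition of `[m]`. -/
def splitProd (m : ℕ) (P Q : List Block) : List Block :=
  List.zipWith (· ∪ ·) P (shiftUp m Q) ++ P.drop Q.length ++ (shiftUp m Q).drop P.length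

/-- `P` is a splitable partition of `[n]`: a split product of two nonempty partitions. -/
def Splitable (n : ℕ) (P : List Block) : Prop :=
  ∃ (a b : ℕ) (σ τ : List Block), 0 < a ∧ 0 < b ∧ a + b = n ∧
      IsPartition a σ ∧ IsPartition b τ ∧ P = splitProd a σ τ

/-- The minimum of a block (`0` for the empty block). -/
def blockMin (B : Block) : ℕ := B.min.untopD 0

/-- The restriction `π_S`: the nonempty intersections `B ∩ S`, listed in
increasing order of their minimal elements. -/
def restrict (P : List Block) (S : Finset ℕ) : List Block :=
  (((P.map (· ∩ S)).filter fun B => decide B.Nonempty).mergeSort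
    fun B C => decide (blockMin B ≤ blockMin C))

/-- The blocks from position `d` on have union equal to an upper part
`{x_t, x_{t+1}, …, x_n}` of the underlying set. -/
def IsUpperSuffix (P : List Block) (d : ℕ) : Prop :=
  ∃ s ∈ support P, support (P.drop d) = (support P).filter (s ≤ ·)

instance (P : List Block) : DecidablePred (IsUpperSuffix P) := fun d => by
  unfold IsUpperSuffix; infer_instance

/-- `R(π)`: the longest proper-or-improper final segment `{B_r,…,B_k}` of the blocks
whose union is an upper part `{x_t,…,x_n}` of the underlying set. -/
def Rmap (P : List Block) : List Block :=
  P.drop ((((Finset.range P.length).filter fun d => IsUpperSuffix P d).max).unbotD 0)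

/-- `π = π_{[i-1]} ∘ (π_{[i,n]} − i + 1)`. -/
def SplitsAt (n i : ℕ) (P : List Block) : Prop :=
  P = splitProd (i - 1) (restrict P (Finset.Icc 1 (i - 1)))
        (shiftDown (i - 1) (restrict P (Finset.Icc i n)))

instance (n : ℕ) (P : List Block) : DecidablePred fun i => SplitsAt n i P := fun i => by
  unfold SplitsAt; infer_instance

/-- The index `i` in the definition of `φ`: the smallest element of the first block
`B_1` such that `π = π_{[i-1]} ∘ (π_{[i,n]} − i + 1)`. -/
def phiI (n : ℕ) (P : List Block) : ℕ :=
  (((P.headD ∅).filter fun i => 2 ≤ i ∧ SplitsAt n i P).min).untopD 0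

/-- The index `j` in the definition of `φ`: the smallest element of the underlying
set of `R(π_{[i,n]})`. -/
def phiJ (n : ℕ) (P : List Block) : ℕ :=
  ((support (Rmap (restrict P (Finset.Icc (phiI n P) n)))).min).untopD 0

/-- The map `φ`: `φ(π) = π_{[j-1]} | (π_{[j,n]} − j + 1)`. -/
def phi (n : ℕ) (P : List Block) : List Block :=
  slash (phiJ n P - 1) (restrict P (Finset.Icc 1 (phiJ n P - 1)))
    (shiftDown (phiJ n P - 1) (restrict P (Finset.Icc (phiJ n P) n)))

/-- `σ_{[j-1]} = σ_{[i-1]} ∘ (σ_{[i,j-1]} − i + 1)`. -/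
def SplitsAtRes (j i : ℕ) (P : List Block) : Prop :=
  restrict P (Finset.Icc 1 (j - 1)) =
    splitProd (i - 1) (restrict P (Finset.Icc 1 (i - 1)))
      (shiftDown (i - 1) (restrict P (Finset.Icc i (j - 1))))

instance (j : ℕ) (P : List Block) : DecidablePred fun i => SplitsAtRes j i P := fun i => by
  unfold SplitsAtRes; infer_instance

open scoped Classical in
/-- The map `ψ`. Here `j` is the smallest element of the underlying set of `R(σ)`,
`r` is the (0-based) position of the first block of `R(σ)`, and in the splitable case
`i` is the smallest element of `B_1` with `σ_{[j-1]} = σ_{[i-1]} ∘ (σ_{[i,j-1]} − i + 1)`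
and `q` is the (0-based) position of the first block contained in `[i-1]`. -/
noncomputable def psi (n : ℕ) (P : List Block) : List Block :=
  let j := ((support (Rmap P)).min).untopD 0
  if Splitable (j - 1) (restrict P (Finset.Icc 1 (j - 1))) then
    let i := (((P.headD ∅).filter fun i => 2 ≤ i ∧ SplitsAtRes j i P).min).untopD 0
    let q := P.findIdx fun B => decide (B ⊆ Finset.Icc 1 (i - 1))
    let r := P.length - (Rmap P).length
    P.take q ++ (List.zipWith (· ∪ ·) ((P.drop q).take (r - q)) (P.drop r)
      ++ ((P.drop q).take (r - q)).drop (P.drop r).length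
      ++ (P.drop r).drop (r - q))
  else
    splitProd (j - 1) (restrict P (Finset.Icc 1 (j - 1)))
      (shiftDown (j - 1) (restrict P (Finset.Icc j n)))

/-! Since the blocks are listed by increasing minima, the blocks `B_1, …, B_q` with minimum
below `i` form an initial segment, and all later blocks lie inside `[i, n]`. So `σ_{[i-1]}` is
`B_1 ∩ [1, i-1], …, B_q ∩ [1, i-1]` in this order, and the hypothesis on the minima says that
`σ_{[i,n]}` is `B_1 ∩ [i, n], …, B_k ∩ [i, n]` in this order. Uniting the two lists position
by position, which is what the split product does, gives back `B_1, …, B_k`. -/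

open Finset hiding restrict

theorem List.Pairwise.exists_eq_append_forall {α : Type*} {R : α → α → Prop} {p : α → Prop}
    {L : List α} (hL : L.Pairwise R) (hp : ∀ a b, R a b → p b → p a) :
    ∃ L₁ L₂, L = L₁ ++ L₂ ∧ (∀ a ∈ L₁, p a) ∧ ∀ b ∈ L₂, ¬ p b := by
  induction L with
  | nil => exact ⟨[], [], rfl, by simp, by simp⟩
  | cons a L ih =>
    rw [List.pairwise_cons] at hL
    by_cases ha : p a
    · obtain ⟨L₁, L₂, rfl, h₁, h₂⟩ := ih hL.2
      exact ⟨a :: L₁, L₂, rfl, List.forall_mem_cons.mpr ⟨ha, h₁⟩, h₂⟩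
    · refine ⟨[], a :: L, rfl, by simp, List.forall_mem_cons.mpr ⟨ha, fun b hb hpb => ?_⟩⟩
      exact ha (hp a b (hL.1 b hb) hpb)

theorem support_cons (B : Block) (P : List Block) : support (B :: P) = B ∪ support P := rfl

theorem mem_support {P : List Block} {x : ℕ} : x ∈ support P ↔ ∃ B ∈ P, x ∈ B := by
  induction P with
  | nil => simp [support]
  | cons B P ih => simp [support_cons, ih]

theorem blockMin_eq_min' {B : Block} (hB : B.Nonempty) : blockMin B = B.min' hB := by
  rw [blockMin, ← coe_min' hB, WithTop.untopD_coe]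

theorem blockMin_mem {B : Block} (hB : B.Nonempty) : blockMin B ∈ B := by
  rw [blockMin_eq_min' hB]; exact min'_mem B hB

theorem blockMin_le {B : Block} {x : ℕ} (hx : x ∈ B) : blockMin B ≤ x := by
  rw [blockMin_eq_min' ⟨x, hx⟩]; exact min'_le B x hx

theorem min_lt_min_iff {B C : Block} (hB : B.Nonempty) (hC : C.Nonempty) :
    B.min < C.min ↔ blockMin B < blockMin C := by
  rw [← coe_min' hB, ← coe_min' hC, WithTop.coe_lt_coe, blockMin_eq_min', blockMin_eq_min']

theorem blockMin_image {B : Block} {f : ℕ → ℕ} (hf : Monotone f) (hB : B.Nonempty) :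
    blockMin (B.image f) = f (blockMin B) := by
  rw [blockMin_eq_min' hB, blockMin_eq_min' (hB.image f), min'_image hf]

theorem min_inter_eq_min {B S : Finset ℕ} (hB : B.Nonempty) (hS : blockMin B ∈ S) :
    (B ∩ S).min = B.min := by
  refine le_antisymm ?_ (Finset.min_mono inter_subset_left)
  rw [← coe_min' hB, ← blockMin_eq_min' hB]
  exact Finset.min_le (mem_inter.mpr ⟨blockMin_mem hB, hS⟩)

theorem isPartition_of_pairwise {n : ℕ} {L : List Block} (hne : ∀ B ∈ L, B.Nonempty)
    (hdisj : L.Pairwise Disjoint) (hsort : L.Pairwise fun B C => blockMin B ≤ blockMin C)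
    (hsupp : support L = Icc 1 n) : IsPartition n L := by
  refine ⟨hne, hdisj, hsupp, List.Pairwise.isChain ?_⟩
  refine (hdisj.and hsort).imp_of_mem fun {B C} hB hC ⟨hBC, hle⟩ => ?_
  rw [min_lt_min_iff (hne B hB) (hne C hC)]
  refine lt_of_le_of_ne hle fun heq => disjoint_left.mp hBC (blockMin_mem (hne B hB)) ?_
  exact heq ▸ blockMin_mem (hne C hC)

namespace IsPartition

variable {n : ℕ} {P : List Block}

theorem subset_Icc (hP : IsPartition n P) {B : Block} (hB : B ∈ P) : B ⊆ Icc 1 n :=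
  fun _ hx => hP.2.2.1 ▸ mem_support.mpr ⟨B, hB, hx⟩

theorem pairwise_blockMin_lt (hP : IsPartition n P) :
    P.Pairwise fun B C => blockMin B < blockMin C :=
  hP.2.2.2.pairwise.imp_of_mem fun hB hC h => (min_lt_min_iff (hP.1 _ hB) (hP.1 _ hC)).mp h

theorem exists_eq_append_blockMin_lt (hP : IsPartition n P) (i : ℕ) :
    ∃ P₁ P₂, P = P₁ ++ P₂ ∧ (∀ B ∈ P₁, blockMin B < i) ∧ ∀ B ∈ P₂, B ⊆ Icc i n := by
  obtain ⟨P₁, P₂, hsplit, hP₁, hP₂⟩ := hP.pairwise_blockMin_lt.exists_eq_append_forall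
    (p := fun B => blockMin B < i) fun _ _ hBC hC => hBC.trans hC
  refine ⟨P₁, P₂, hsplit, hP₁, fun B hB x hx => ?_⟩
  have := mem_Icc.mp (hP.subset_Icc (hsplit ▸ List.mem_append_right _ hB) hx)
  have := blockMin_le hx
  have := hP₂ B hB
  exact mem_Icc.mpr (by omega)

end IsPartition

section restrict

variable {P : List Block} {S : Finset ℕ}

theorem restrict_perm (P : List Block) (S : Finset ℕ) :
    (restrict P S).Perm ((P.map (· ∩ S)).filter fun B => decide B.Nonempty) :=
  List.mergeSort_perm _ _

theorem mem_restrict {B : Block} : B ∈ restrict P S ↔ B.Nonempty ∧ ∃ C ∈ P, C ∩ S = B := by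
  simp [(restrict_perm P S).mem_iff, and_comm]

theorem support_restrict : support (restrict P S) = support P ∩ S := by
  ext x
  simp only [mem_support, mem_restrict, mem_inter]
  constructor
  · rintro ⟨_, ⟨-, C, hC, rfl⟩, hx⟩
    exact ⟨⟨C, hC, (mem_inter.mp hx).1⟩, (mem_inter.mp hx).2⟩
  · rintro ⟨⟨C, hC, hx⟩, hxS⟩
    exact ⟨C ∩ S, ⟨⟨x, mem_inter.mpr ⟨hx, hxS⟩⟩, C, hC, rfl⟩, mem_inter.mpr ⟨hx, hxS⟩⟩

theorem pairwise_disjoint_restrict (h : P.Pairwise Disjoint) :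
    (restrict P S).Pairwise Disjoint := by
  refine (restrict_perm P S).symm.pairwise ?_ fun h => h.symm
  exact List.Pairwise.filter _ (List.pairwise_map.mpr
    (h.imp fun h => h.mono inter_subset_left inter_subset_left))

theorem pairwise_blockMin_restrict :
    (restrict P S).Pairwise fun B C => blockMin B ≤ blockMin C := by
  simpa [restrict] using List.pairwise_mergeSort
    (le := fun B C : Block => decide (blockMin B ≤ blockMin C))
    (fun _ _ _ => by simpa using le_trans) (fun B C => by simpa using le_total _ _)
    ((P.map (· ∩ S)).filter fun B => decide B.Nonempty)

theorem restrict_eq_map (hne : ∀ B ∈ P, (B ∩ S).Nonempty)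
    (hsort : P.Pairwise fun B C => (B ∩ S).min < (C ∩ S).min) :
    restrict P S = P.map (· ∩ S) := by
  rw [restrict, List.filter_eq_self.mpr (by simpa using hne)]
  refine List.mergeSort_of_pairwise (List.pairwise_map.mpr (hsort.imp_of_mem ?_))
  intro B C hB hC h
  simpa using ((min_lt_min_iff (hne B hB) (hne C hC)).mp h).le

theorem restrict_eq_map_of_blockMin_mem (hne : ∀ B ∈ P, B.Nonempty) (hS : ∀ B ∈ P, blockMin B ∈ S)
    (hsort : P.Pairwise fun B C => B.min < C.min) :
    restrict P S = P.map (· ∩ S) := by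
  refine restrict_eq_map (fun B hB => ⟨_, mem_inter.mpr ⟨blockMin_mem (hne B hB), hS B hB⟩⟩) ?_
  refine hsort.imp_of_mem fun hB hC h => ?_
  rwa [min_inter_eq_min (hne _ hB) (hS _ hB), min_inter_eq_min (hne _ hC) (hS _ hC)]

theorem restrict_append_of_disjoint {Q : List Block} (hQ : ∀ B ∈ Q, Disjoint B S) :
    restrict (P ++ Q) S = restrict P S := by
  have hQS : (Q.map (· ∩ S)).filter (fun B => decide B.Nonempty) = [] :=
    List.filter_eq_nil_iff.mpr fun B hB => by
      obtain ⟨C, hC, rfl⟩ := List.mem_map.mp hB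
      simp [disjoint_iff_inter_eq_empty.mp (hQ C hC)]
  rw [restrict, restrict, List.map_append, List.filter_append, hQS, List.append_nil]

theorem IsPartition.restrict_Icc_eq_map {n i : ℕ} {P₁ P₂ : List Block} (hP : IsPartition n P)
    (hsplit : P = P₁ ++ P₂) (hP₁ : ∀ B ∈ P₁, blockMin B < i) (hP₂ : ∀ B ∈ P₂, B ⊆ Icc i n) :
    restrict P (Icc 1 (i - 1)) = P₁.map (· ∩ Icc 1 (i - 1)) := by
  have hmem : ∀ B ∈ P₁, B ∈ P := fun B hB => hsplit ▸ List.mem_append_left _ hB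
  rw [hsplit, restrict_append_of_disjoint ?_, restrict_eq_map_of_blockMin_mem ?_ ?_ ?_]
  · exact fun B hB => hP.1 B (hmem B hB)
  · intro B hB
    have := mem_Icc.mp (hP.subset_Icc (hmem B hB) (blockMin_mem (hP.1 B (hmem B hB))))
    have := hP₁ B hB
    exact mem_Icc.mpr (by omega)
  · exact hP.2.2.2.pairwise.sublist (hsplit ▸ List.sublist_append_left P₁ P₂)
  · exact fun B hB => disjoint_left.mpr fun x hx hx' => by
      have := mem_Icc.mp (hP₂ B hB hx); have := mem_Icc.mp hx'; omega

theorem IsPartition.restrict_Icc {n m : ℕ} (hP : IsPartition n P) (hmn : m ≤ n) :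
    IsPartition m (restrict P (Icc 1 m)) := by
  refine isPartition_of_pairwise (fun B hB => (mem_restrict.mp hB).1)
    (pairwise_disjoint_restrict hP.2.1) pairwise_blockMin_restrict ?_
  rw [support_restrict, hP.2.2.1, inter_eq_right.mpr (Icc_subset_Icc_right hmn)]

end restrict

theorem shiftUp_shiftDown {m : ℕ} {Q : List Block} (h : ∀ B ∈ Q, ∀ x ∈ B, m ≤ x) :
    shiftUp m (shiftDown m Q) = Q := by
  rw [shiftUp, shiftDown, List.map_map]
  refine (List.map_congr_left fun B hB => ?_).trans (List.map_id Q)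
  calc (B.image (· - m)).image (· + m) = B.image id := by
        rw [image_image]; exact image_congr fun x hx => Nat.sub_add_cancel (h B hB x hx)
    _ = B := image_id

theorem support_shiftDown (m : ℕ) (Q : List Block) :
    support (shiftDown m Q) = (support Q).image (· - m) := by
  ext x
  simp only [mem_image, mem_support, shiftDown, List.mem_map]
  aesop

theorem IsPartition.shiftDown_restrict {n : ℕ} {P : List Block} (hP : IsPartition n P) (i : ℕ) :
    IsPartition (n - (i - 1)) (shiftDown (i - 1) (restrict P (Icc i n))) := by
  have hge : ∀ B ∈ restrict P (Icc i n), ∀ x ∈ B, i ≤ x := by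
    intro B hB x hx
    obtain ⟨-, C, -, rfl⟩ := mem_restrict.mp hB
    exact (mem_Icc.mp (mem_inter.mp hx).2).1
  refine isPartition_of_pairwise ?_ ?_ ?_ ?_
  · simp only [shiftDown, List.mem_map]
    rintro _ ⟨B, hB, rfl⟩
    exact (mem_restrict.mp hB).1.image _
  · refine List.pairwise_map.mpr ((pairwise_disjoint_restrict hP.2.1).imp_of_mem ?_)
    intro B C hB hC hBC
    refine disjoint_left.mpr ?_
    simp only [mem_image]
    rintro _ ⟨x, hx, rfl⟩ ⟨y, hy, hyx⟩
    have hxy : x = y := by have := hge B hB x hx; have := hge C hC y hy; omega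
    exact disjoint_left.mp hBC hx (hxy ▸ hy)
  · refine List.pairwise_map.mpr (pairwise_blockMin_restrict.imp_of_mem ?_)
    intro B C hB hC h
    have hshift : Monotone (· - (i - 1)) := fun _ _ h => Nat.sub_le_sub_right h _
    rw [blockMin_image hshift (mem_restrict.mp hB).1, blockMin_image hshift (mem_restrict.mp hC).1]
    exact hshift h
  · rw [support_shiftDown, support_restrict, hP.2.2.1]
    ext x
    simp only [mem_image, mem_inter, mem_Icc]
    constructor
    · rintro ⟨y, ⟨⟨h1, h2⟩, h3, h4⟩, rfl⟩
      omega
    · intro hx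
      exact ⟨x + (i - 1), by omega⟩

theorem eq_splitProd_of_eq_append {P P₁ P₂ : List Block} {S T : Finset ℕ} {m : ℕ}
    (hP : P = P₁ ++ P₂) (hP₁ : ∀ B ∈ P₁, B ⊆ S ∪ T) (hP₂ : ∀ B ∈ P₂, B ⊆ T)
    (hT : ∀ x ∈ T, m ≤ x) :
    P = splitProd m (P₁.map (· ∩ S)) (shiftDown m (P.map (· ∩ T))) := by
  have hzip : List.zipWith (· ∪ ·) (P₁.map (· ∩ S)) (P₁.map (· ∩ T)) = P₁ := by
    rw [List.zipWith_map, List.zipWith_self]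
    refine (List.map_congr_left fun B hB => ?_).trans (List.map_id P₁)
    rw [← inter_union_distrib_left, inter_eq_left.mpr (hP₁ B hB), id]
  have hP₂T : P₂.map (· ∩ T) = P₂ :=
    (List.map_congr_left fun B hB => inter_eq_left.mpr (hP₂ B hB)).trans (List.map_id P₂)
  have hshift : shiftUp m (shiftDown m (P.map (· ∩ T))) = P.map (· ∩ T) :=
    shiftUp_shiftDown (by simp +contextual [hT])
  rw [splitProd, hshift, shiftDown, List.length_map, List.length_map,
    List.drop_eq_nil_of_le (by simp [hP]), List.append_nil, hP, List.map_append,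
    List.drop_left' (by simp), hP₂T, ← List.append_nil (P₁.map (· ∩ S)),
    List.zipWith_append (by simp), List.zipWith_nil_left, List.append_nil, hzip]

/-- Let `σ = {B_1,…,B_k}` be a set partition of `[n]` and `2 ≤ i ≤ n`.
If `B_p ∩ [i,n] ≠ ∅` for every `p` and
`min (B_1 ∩ [i,n]) < min (B_2 ∩ [i,n]) < ⋯ < min (B_k ∩ [i,n])`, then
`σ = σ_{[i-1]} ∘ (σ_{[i,n]} − i + 1)`; in particular `σ` is splitable. -/
theorem splitsAt_of_increasing_minima (n : ℕ) (P : List Block) (hP : IsPartition n P)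
    (i : ℕ) (hi2 : 2 ≤ i) (hin : i ≤ n)
    (hne : ∀ B ∈ P, (B ∩ Finset.Icc i n).Nonempty)
    (hmono : List.Chain'
      (fun B C : Block => (B ∩ Finset.Icc i n).min < (C ∩ Finset.Icc i n).min) P) :
    SplitsAt n i P ∧ Splitable n P := by
  obtain ⟨P₁, P₂, hsplit, hP₁, hP₂⟩ := hP.exists_eq_append_blockMin_lt i
  have hsplits : SplitsAt n i P := by
    rw [SplitsAt, hP.restrict_Icc_eq_map hsplit hP₁ hP₂, restrict_eq_map hne hmono.pairwise]
    refine eq_splitProd_of_eq_append hsplit (fun B hB => ?_) hP₂ (fun x hx => ?_)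
    · refine (hP.subset_Icc (hsplit ▸ List.mem_append_left _ hB)).trans fun x hx => ?_
      simp only [mem_union, mem_Icc] at hx ⊢
      omega
    · have := (mem_Icc.mp hx).1
      omega
  exact ⟨hsplits, i - 1, n - (i - 1), _, _, by omega, by omega, by omega,
    hP.restrict_Icc (by omega), hP.shiftDown_restrict i, hsplits⟩
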